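/- Let β be a real d×d matrix, α a positive semidefinite real symmetric d×d matrix, and p ≥ 0. For a positive semidefinite real symmetric d×d matrix u, define φ(t,u) = p·log det(I + u σ_t^β(α)) and ψ(t,u) = e^{βᵀt} u (I + σ_t^β(α) u)^{-1} e^{βt}. Then (φ, ψ) satisfy the generalized Riccati equations: for all t ≥ 0, ∂_t φ(t,u) = 2p·tr(α ψ(t,u)) with φ(0,u) = 0, and ∂_t ψ(t,u) = -2 ψ(t,u) α ψ(t,u) + ψ(t,u) β + βᵀ ψ(t,u) with ψ(0,u) = u. -/

import Mathlib

/-!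
By the fundamental theorem of calculus `∂ₜ σ_t = 2 ω_t = 2 e^{βt} α e^{βᵀt}`, and `σ_t`, an
integral of the positive semidefinite matrices `ω_s`, is positive semidefinite; hence
`det (I + σ_t u) = det (I + u σ_t) > 0`. Differentiating `ψ = e^{βᵀt} u R e^{βt}` with
`R = (I + σ_t u)⁻¹` and `∂ₜ R = -R (∂ₜ σ_t) u R`, the middle term is exactly `-2 ψ α ψ`.
For `φ`, Jacobi's formula gives `∂ₜ log det N = tr (N⁻¹ ∂ₜ N)`, and the push-through identity
`(I + u σ)⁻¹ u = u (I + σ u)⁻¹` together with cyclicity of the trace turns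
`tr ((I + u σ_t)⁻¹ u ω_t)` into `tr (α ψ)`.
-/

open MeasureTheory Matrix

/-- The flow `ω_t^β(x) = e^{βt} x e^{βᵀt}` on real `d×d` matrices. -/
noncomputable def omegaFlow {d : ℕ} (β : Matrix (Fin d) (Fin d) ℝ) (t : ℝ)
    (x : Matrix (Fin d) (Fin d) ℝ) : Matrix (Fin d) (Fin d) ℝ :=
  NormedSpace.exp (t • β) * x * (NormedSpace.exp (t • β))ᵀ

/-- The twofold integral `σ_t^β(x) = 2 ∫₀ᵗ ω_s^β(x) ds`, defined entrywise. -/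
noncomputable def sigmaFlow {d : ℕ} (β : Matrix (Fin d) (Fin d) ℝ) (t : ℝ)
    (x : Matrix (Fin d) (Fin d) ℝ) : Matrix (Fin d) (Fin d) ℝ :=
  Matrix.of fun i j => 2 * ∫ s in (0 : ℝ)..t, omegaFlow β s x i j

/-- `φ(t,u) = p · log det (I + u σ_t^β(α))`. -/
noncomputable def wishartPhi {d : ℕ} (β α : Matrix (Fin d) (Fin d) ℝ) (p t : ℝ)
    (u : Matrix (Fin d) (Fin d) ℝ) : ℝ :=
  p * Real.log (1 + u * sigmaFlow β t α).det

/-- `ψ(t,u) = e^{βᵀt} u (I + σ_t^β(α) u)⁻¹ e^{βt}`. -/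
noncomputable def wishartPsi {d : ℕ} (β α : Matrix (Fin d) (Fin d) ℝ) (t : ℝ)
    (u : Matrix (Fin d) (Fin d) ℝ) : Matrix (Fin d) (Fin d) ℝ :=
  NormedSpace.exp (t • βᵀ) * u * (1 + sigmaFlow β t α * u)⁻¹ * NormedSpace.exp (t • β)

section MatrixLemmas

variable {n : Type*} [Fintype n]

theorem Matrix.posSemidef_of_intervalIntegral {M : ℝ → Matrix n n ℝ} {t : ℝ}
    (hM : Continuous M) (hpsd : ∀ s, (M s).PosSemidef) (ht : 0 ≤ t) :
    (of fun i j => ∫ s in (0 : ℝ)..t, M s i j).PosSemidef := by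
  have hcont (x : n → ℝ) (i j : n) : Continuous fun s => x i * (M s i j * x j) := by
    have := hM.matrix_elem i j
    fun_prop
  refine posSemidef_iff_dotProduct_mulVec.2 ⟨?_, fun x => ?_⟩
  · ext i j
    exact intervalIntegral.integral_congr fun s _ => (hpsd s).1.apply i j
  · have hquad : star x ⬝ᵥ (of fun i j => ∫ s in (0 : ℝ)..t, M s i j) *ᵥ x
        = ∫ s in (0 : ℝ)..t, star x ⬝ᵥ M s *ᵥ x := by
      simp only [dotProduct, mulVec, of_apply, star_trivial, Finset.mul_sum]
      rw [intervalIntegral.integral_finsetSum fun i _ =>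
        (continuous_finsetSum _ fun j _ => hcont x i j).intervalIntegrable _ _]
      refine Finset.sum_congr rfl fun i _ => ?_
      rw [intervalIntegral.integral_finsetSum fun j _ => (hcont x i j).intervalIntegrable _ _]
      refine Finset.sum_congr rfl fun j _ => ?_
      rw [intervalIntegral.integral_const_mul, intervalIntegral.integral_mul_const]
    rw [hquad]
    exact intervalIntegral.integral_nonneg ht fun s _ => (hpsd s).dotProduct_mulVec_nonneg x

variable [DecidableEq n]

theorem Matrix.trace_adjugate_mul {R : Type*} [CommRing R] (A B : Matrix n n R) :
    (A.adjugate * B).trace = ∑ i, (A.updateCol i fun k => B k i).det := by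
  refine Finset.sum_congr rfl fun i _ => ?_
  rw [← cramer_apply, cramer_eq_adjugate_mulVec]
  rfl

theorem Matrix.hasDerivAt_det {𝕜 : Type*} [NontriviallyNormedField 𝕜] {N : 𝕜 → Matrix n n 𝕜}
    {N' : Matrix n n 𝕜} {t : 𝕜} (h : ∀ i j, HasDerivAt (fun s => N s i j) (N' i j) t) :
    HasDerivAt (fun s => (N s).det) ((N t).adjugate * N').trace t := by
  have hprod (σ : Equiv.Perm n) : HasDerivAt (fun s => ∏ i, N s (σ i) i)
      (∑ i, (∏ j ∈ Finset.univ.erase i, N t (σ j) j) • N' (σ i) i) t :=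
    HasDerivAt.fun_finsetProd fun i _ => h (σ i) i
  have hsum := HasDerivAt.fun_sum (u := Finset.univ) fun σ _ =>
    (hprod σ).const_mul ((Equiv.Perm.sign σ : ℤ) : 𝕜)
  simp only [det_apply']
  refine hsum.congr_deriv ?_
  simp only [Finset.mul_sum]
  rw [trace_adjugate_mul, Finset.sum_comm]
  refine Finset.sum_congr rfl fun i _ => ?_
  rw [det_apply']
  refine Finset.sum_congr rfl fun σ _ => ?_
  rw [← Finset.mul_prod_erase _ _ (Finset.mem_univ i), updateCol_self, smul_eq_mul,
    mul_comm (N' (σ i) i)]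
  congr 2
  exact Finset.prod_congr rfl fun j hj => (updateCol_ne (Finset.ne_of_mem_erase hj)).symm

theorem Matrix.hasDerivAt_log_det {N : ℝ → Matrix n n ℝ} {N' : Matrix n n ℝ} {t : ℝ}
    (h : ∀ i j, HasDerivAt (fun s => N s i j) (N' i j) t) (hN : (N t).det ≠ 0) :
    HasDerivAt (fun s => Real.log (N s).det) ((N t)⁻¹ * N').trace t := by
  refine ((hasDerivAt_det h).log hN).congr_deriv ?_
  rw [inv_def, Ring.inverse_eq_inv', smul_mul, trace_smul, smul_eq_mul, div_eq_inv_mul]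

theorem Matrix.inv_one_add_mul_mul_eq_mul_inv_one_add_mul {R : Type*} [CommRing R]
    {A B : Matrix n n R} (h : IsUnit (1 + A * B).det) :
    (1 + A * B)⁻¹ * A = A * (1 + B * A)⁻¹ := by
  have h' : IsUnit (1 + B * A).det := by rwa [det_one_add_mul_comm]
  calc (1 + A * B)⁻¹ * A = (1 + A * B)⁻¹ * (A * (1 + B * A)) * (1 + B * A)⁻¹ := by
        rw [Matrix.mul_assoc, Matrix.mul_assoc, mul_nonsing_inv _ h', Matrix.mul_one]
    _ = (1 + A * B)⁻¹ * ((1 + A * B) * A) * (1 + B * A)⁻¹ := by noncomm_ring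
    _ = A * (1 + B * A)⁻¹ := by rw [nonsing_inv_mul_cancel_left _ _ h]

/-- Writing `B = Cᴴ C`, Sylvester's identity turns `det (1 + A B)` into `det (1 + C A Cᴴ)`,
the determinant of a positive definite matrix. -/
theorem Matrix.det_one_add_mul_pos {A B : Matrix n n ℝ} (hA : A.PosSemidef)
    (hB : B.PosSemidef) : 0 < (1 + A * B).det := by
  obtain ⟨C, rfl⟩ : ∃ C : Matrix n n ℝ, B = Cᴴ * C := by
    open scoped MatrixOrder in exact CStarAlgebra.nonneg_iff_eq_star_mul_self.mp hB.nonneg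
  rw [← Matrix.mul_assoc, det_one_add_mul_comm, ← Matrix.mul_assoc]
  exact (PosDef.one.add_posSemidef (hA.mul_mul_conjTranspose_same C)).det_pos

end MatrixLemmas

theorem HasDerivAt.ringInverse {𝕜 R : Type*} [NontriviallyNormedField 𝕜] [NormedRing R]
    [HasSummableGeomSeries R] [NormedAlgebra 𝕜 R] {f : 𝕜 → R} {f' : R} {t : 𝕜}
    (h : HasDerivAt f f' t) (ht : IsUnit (f t)) :
    HasDerivAt (fun s => Ring.inverse (f s))
      (-(Ring.inverse (f t) * f' * Ring.inverse (f t))) t := by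
  obtain ⟨U, hU⟩ := ht
  have hinv := hasFDerivAt_ringInverse (𝕜 := 𝕜) U
  rw [hU] at hinv
  refine (hinv.comp_hasDerivAt t h).congr_deriv ?_
  simp [← hU]

section MatrixCalculus

-- Derivatives do not see the choice of norm; `exp` and `Ring.inverse` need an algebra norm.
attribute [local instance] Matrix.linftyOpNormedAddCommGroup Matrix.linftyOpNormedSpace
  Matrix.linftyOpNormedRing Matrix.linftyOpNormedAlgebra

variable {n : Type*} [Fintype n]

theorem HasDerivAt.matrix_apply {M : ℝ → Matrix n n ℝ} {M' : Matrix n n ℝ} {t : ℝ}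
    (h : HasDerivAt M M' t) (i j : n) : HasDerivAt (fun s => M s i j) (M' i j) t :=
  (entryLinearMap ℝ ℝ i j).toContinuousLinearMap.hasFDerivAt.comp_hasDerivAt t h

variable [DecidableEq n]

theorem Matrix.hasDerivAt_of_forall_apply {M : ℝ → Matrix n n ℝ} {M' : Matrix n n ℝ} {t : ℝ}
    (h : ∀ i j, HasDerivAt (fun s => M s i j) (M' i j) t) : HasDerivAt M M' t := by
  have hsum := HasDerivAt.fun_sum (u := Finset.univ) fun i _ =>
    HasDerivAt.fun_sum (u := Finset.univ) fun j _ => (h i j).smul_const (single i j (1 : ℝ))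
  simp only [smul_single, smul_eq_mul, mul_one, ← matrix_eq_sum_single] at hsum
  exact hsum

theorem HasDerivAt.matrix_inv {M : ℝ → Matrix n n ℝ} {M' : Matrix n n ℝ} {t : ℝ}
    (h : HasDerivAt M M' t) (ht : IsUnit (M t).det) :
    HasDerivAt (fun s => (M s)⁻¹) (-((M t)⁻¹ * M' * (M t)⁻¹)) t := by
  have hR := h.ringInverse ((isUnit_iff_isUnit_det _).2 ht)
  simp only [← nonsing_inv_eq_ringInverse] at hR
  exact hR

variable {d : ℕ} (β : Matrix (Fin d) (Fin d) ℝ)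

theorem omegaFlow_eq (t : ℝ) (x : Matrix (Fin d) (Fin d) ℝ) :
    omegaFlow β t x = NormedSpace.exp (t • β) * x * NormedSpace.exp (t • βᵀ) := by
  rw [omegaFlow, ← Matrix.exp_transpose, transpose_smul]

theorem continuous_omegaFlow (x : Matrix (Fin d) (Fin d) ℝ) :
    Continuous fun s => omegaFlow β s x := by
  have hexp : Continuous fun s : ℝ => NormedSpace.exp (s • β) :=
    NormedSpace.exp_continuous.comp (continuous_id.smul continuous_const)
  exact (hexp.mul continuous_const).mul hexp.matrix_transpose

theorem sigmaFlow_zero (x : Matrix (Fin d) (Fin d) ℝ) : sigmaFlow β 0 x = 0 := by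
  ext i j
  simp [sigmaFlow]

theorem hasDerivAt_sigmaFlow (t : ℝ) (x : Matrix (Fin d) (Fin d) ℝ) :
    HasDerivAt (fun s => sigmaFlow β s x) ((2 : ℝ) • omegaFlow β t x) t := by
  refine Matrix.hasDerivAt_of_forall_apply fun i j => ?_
  have hc := (continuous_omegaFlow β x).matrix_elem i j
  simpa [sigmaFlow] using (intervalIntegral.integral_hasDerivAt_right (hc.intervalIntegrable _ _)
    hc.stronglyMeasurable.stronglyMeasurableAtFilter hc.continuousAt).const_mul (2 : ℝ)

variable {β}

theorem sigmaFlow_posSemidef {x : Matrix (Fin d) (Fin d) ℝ} (hx : x.PosSemidef) {t : ℝ}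
    (ht : 0 ≤ t) : (sigmaFlow β t x).PosSemidef := by
  have hω (s : ℝ) : (omegaFlow β s x).PosSemidef := by
    simpa [omegaFlow] using hx.mul_mul_conjTranspose_same (NormedSpace.exp (s • β))
  have hσ : sigmaFlow β t x = (2 : ℝ) • of fun i j => ∫ s in (0 : ℝ)..t, omegaFlow β s x i j := by
    ext i j
    simp [sigmaFlow]
  rw [hσ]
  exact (Matrix.posSemidef_of_intervalIntegral (continuous_omegaFlow β x) hω ht).smul
    zero_le_two

theorem wishartPsi_zero (α u : Matrix (Fin d) (Fin d) ℝ) : wishartPsi β α 0 u = u := by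
  simp [wishartPsi, sigmaFlow_zero]

theorem wishartPhi_zero (α : Matrix (Fin d) (Fin d) ℝ) (p : ℝ) (u : Matrix (Fin d) (Fin d) ℝ) :
    wishartPhi β α p 0 u = 0 := by
  simp [wishartPhi, sigmaFlow_zero]

variable {α u : Matrix (Fin d) (Fin d) ℝ} {t : ℝ}

theorem hasDerivAt_wishartPsi (hα : α.PosSemidef) (hu : u.PosSemidef) (ht : 0 ≤ t) :
    HasDerivAt (fun s => wishartPsi β α s u)
      (-((2 : ℝ) • (wishartPsi β α t u * α * wishartPsi β α t u)) +
        wishartPsi β α t u * β + βᵀ * wishartPsi β α t u) t := by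
  have hdet := (Matrix.det_one_add_mul_pos (sigmaFlow_posSemidef (β := β) hα ht) hu).ne'
  have hR := (((hasDerivAt_sigmaFlow β t α).mul_const u).const_add 1).matrix_inv
    (isUnit_iff_ne_zero.2 hdet)
  have hψ := (((hasDerivAt_exp_smul_const' βᵀ t).mul_const u).mul hR).mul
    (hasDerivAt_exp_smul_const β t)
  have hriccati (E F R : Matrix (Fin d) (Fin d) ℝ) :
      (βᵀ * F * u * R + F * u * -(R * ((2 : ℝ) • (E * α * F) * u) * R)) * E + F * u * R * (E * β)
        = -((2 : ℝ) • (F * u * R * E * α * (F * u * R * E))) + F * u * R * E * β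
          + βᵀ * (F * u * R * E) := by
    simp only [smul_mul_assoc, mul_smul_comm, neg_mul, mul_neg, add_mul, Matrix.mul_assoc]
    abel
  refine hψ.congr_deriv ?_
  rw [wishartPsi, omegaFlow_eq]
  exact hriccati _ _ _

theorem hasDerivAt_wishartPhi (hα : α.PosSemidef) (p : ℝ) (hu : u.PosSemidef) (ht : 0 ≤ t) :
    HasDerivAt (fun s => wishartPhi β α p s u) (2 * p * (α * wishartPsi β α t u).trace) t := by
  have hdet := (Matrix.det_one_add_mul_pos hu (sigmaFlow_posSemidef (β := β) hα ht)).ne'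
  have hN := ((hasDerivAt_sigmaFlow β t α).const_mul u).const_add 1
  have hlog := (Matrix.hasDerivAt_log_det hN.matrix_apply hdet).const_mul p
  refine hlog.congr_deriv ?_
  have hpush := Matrix.inv_one_add_mul_mul_eq_mul_inv_one_add_mul (isUnit_iff_ne_zero.2 hdet)
  have hcycle : ((1 + u * sigmaFlow β t α)⁻¹ * (u * omegaFlow β t α)).trace
      = (α * wishartPsi β α t u).trace := by
    rw [← Matrix.mul_assoc, hpush, omegaFlow_eq, wishartPsi, trace_mul_comm α]
    simp only [← Matrix.mul_assoc]
    rw [trace_mul_comm]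
    simp only [Matrix.mul_assoc]
  rw [Matrix.mul_smul, Matrix.mul_smul, trace_smul, hcycle, smul_eq_mul]
  ring

end MatrixCalculus

theorem wishart_riccati_equations_general {d : ℕ} (β : Matrix (Fin d) (Fin d) ℝ)
    (α : Matrix (Fin d) (Fin d) ℝ) (hα : α.PosSemidef) (p : ℝ)
    (u : Matrix (Fin d) (Fin d) ℝ) (hu : u.PosSemidef) :
    wishartPhi β α p 0 u = 0 ∧ wishartPsi β α 0 u = u ∧
      (∀ t : ℝ, 0 ≤ t →
        HasDerivAt (fun s => wishartPhi β α p s u)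
          (2 * p * (α * wishartPsi β α t u).trace) t) ∧
      (∀ t : ℝ, 0 ≤ t → ∀ i j,
        HasDerivAt (fun s => wishartPsi β α s u i j)
          ((-((2 : ℝ) • (wishartPsi β α t u * α * wishartPsi β α t u)) +
              wishartPsi β α t u * β + βᵀ * wishartPsi β α t u) i j) t) :=
  ⟨wishartPhi_zero α p u, wishartPsi_zero α u, fun _ ht => hasDerivAt_wishartPhi hα p hu ht,
    fun _ ht => (hasDerivAt_wishartPsi hα hu ht).matrix_apply⟩

/-- The functions `(φ, ψ)` satisfy the generalized Riccati equations
`∂ₜ φ(t,u) = 2p tr (α ψ(t,u))`, `φ(0,u) = 0`, and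
`∂ₜ ψ(t,u) = -2 ψ(t,u) α ψ(t,u) + ψ(t,u) β + βᵀ ψ(t,u)`, `ψ(0,u) = u`. -/
theorem wishart_riccati_equations {d : ℕ} (β : Matrix (Fin d) (Fin d) ℝ)
    (α : Matrix (Fin d) (Fin d) ℝ) (hα : α.PosSemidef) (p : ℝ) (hp : 0 ≤ p)
    (u : Matrix (Fin d) (Fin d) ℝ) (hu : u.PosSemidef) :
    wishartPhi β α p 0 u = 0 ∧ wishartPsi β α 0 u = u ∧
      (∀ t : ℝ, 0 ≤ t →
        HasDerivAt (fun s => wishartPhi β α p s u)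
          (2 * p * (α * wishartPsi β α t u).trace) t) ∧
      (∀ t : ℝ, 0 ≤ t → ∀ i j,
        HasDerivAt (fun s => wishartPsi β α s u i j)
          ((-((2 : ℝ) • (wishartPsi β α t u * α * wishartPsi β α t u)) +
              wishartPsi β α t u * β + βᵀ * wishartPsi β α t u) i j) t) :=
  wishart_riccati_equations_general β α hα p u hu
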